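/- arXiv:2011.03481 — 2 statements merged into one kernel-verified Lean document; each statement's English description precedes it below -/
import Mathlib

section
/- Let X be a geodesic metric space with base point o, let κ be an increasing function, let α be a geodesic ray based at o, and let β be a quasi-geodesic ray based at o such that every point z of β satisfies d(z, α) ≤ m·κ(d(o,z)). Then every point y of α satisfies d(y, β) ≤ 2m·κ(d(o,y)), provided that for every r ≥ 0 there is a point z on β with d(o,z) = r. -/
open Set Metric

/-- If `α` is a geodesic ray based at `o`, `β` a (quasi-geodesic) ray based
at `o` which lies in the `m·κ`-neighborhood of `α`, and every radius `r ≥ 0` is attained by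
the norm along `β`, then `α` lies in the `2m·κ`-neighborhood of `β`. -/
theorem symmetry_of_sublinear_neighborhoods {X : Type*} [MetricSpace X] (o : X)
    (κ : ℝ → ℝ) (hκmono : MonotoneOn κ (Ici (0 : ℝ)))
    (α β : ℝ → X) (m : ℝ) (hm : 0 < m)
    (hα0 : α 0 = o)
    (hαgeo : ∀ s t : ℝ, 0 ≤ s → 0 ≤ t → dist (α s) (α t) = |s - t|)
    (hβ0 : β 0 = o)
    (hβnbhd : ∀ t : ℝ, 0 ≤ t →
      infDist (β t) (α '' Ici (0 : ℝ)) ≤ m * κ (dist o (β t)))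
    (hβonto : ∀ r : ℝ, 0 ≤ r → ∃ t : ℝ, 0 ≤ t ∧ dist o (β t) = r) :
    ∀ t : ℝ, 0 ≤ t →
      infDist (α t) (β '' Ici (0 : ℝ)) ≤ 2 * m * κ (dist o (α t)) := by
  intro t ht
  -- distance from o to α t is t
  have hdist : ∀ s : ℝ, 0 ≤ s → dist o (α s) = s := by
    intro s hs
    have := hαgeo s 0 hs le_rfl
    rw [hα0] at this
    rw [dist_comm]
    simpa [abs_of_nonneg hs] using this
  have hdt : dist o (α t) = t := hdist t ht
  -- pick z on β with dist o z = t
  obtain ⟨u, hu, hzu⟩ := hβonto t ht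
  set z := β u with hz
  have hzβ : z ∈ β '' Ici (0 : ℝ) := ⟨u, hu, rfl⟩
  have hne : (α '' Ici (0 : ℝ)).Nonempty := ⟨α 0, 0, self_mem_Ici, rfl⟩
  -- infDist z (α image) ≤ m κ t
  have hinf : infDist z (α '' Ici (0 : ℝ)) ≤ m * κ t := by
    have := hβnbhd u hu
    rwa [hzu] at this
  -- main estimate via ε
  have key : ∀ ε : ℝ, 0 < ε → dist (α t) z ≤ 2 * m * κ t + ε := by
    intro ε hε
    have hlt : infDist z (α '' Ici (0 : ℝ)) < m * κ t + ε / 2 :=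
      lt_of_le_of_lt hinf (by linarith)
    obtain ⟨w, hw, hdw⟩ := (infDist_lt_iff hne).mp hlt
    obtain ⟨s, hs, rfl⟩ := hw
    have hds : dist o (α s) = s := hdist s hs
    -- |s - t| ≤ dist z (α s)
    have habs : |s - t| ≤ dist z (α s) := by
      have h1 : dist o (α s) ≤ dist o z + dist z (α s) := dist_triangle _ _ _
      have h2 : dist o z ≤ dist o (α s) + dist (α s) z := dist_triangle _ _ _
      rw [hds, hzu] at h1 h2
      rw [dist_comm (α s) z] at h2
      rw [abs_le]; constructor <;> linarith
    have htri : dist (α t) z ≤ dist (α t) (α s) + dist (α s) z := dist_triangle _ _ _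
    have hgeo : dist (α t) (α s) = |t - s| := hαgeo t s ht hs
    rw [dist_comm (α s) z] at htri
    have : |t - s| = |s - t| := abs_sub_comm _ _
    nlinarith [habs, hdw]
  have hfinal : dist (α t) z ≤ 2 * m * κ t := by
    by_contra h
    push_neg at h
    have := key ((dist (α t) z - 2 * m * κ t) / 2) (by linarith)
    linarith
  calc infDist (α t) (β '' Ici (0 : ℝ)) ≤ dist (α t) z := infDist_le_dist_of_mem hzβ
    _ ≤ 2 * m * κ t := hfinal
    _ = 2 * m * κ (dist o (α t)) := by rw [hdt]
end

section
/- (Frink metrization criterion) Let Y be a topological space such that every point b has a monotonically decreasing sequence of neighborhoods V₁(b) ⊇ V₂(b) ⊇ ⋯ forming a neighborhood basis at b with ∩_i V_i(b) = {b}, and such that for every b and every i there exists j = j(b,i) > i with the property: if V_j(a) ∩ V_j(b) ≠ ∅ for some point a, then V_j(a) ⊆ V_i(b). Then Y is metrizable. -/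
/-!
Choosing `j(b, i)` once and for all and iterating it, `k_0(b) = 0`, `k_{n+1}(b) = j(b, k_n(b))`,
re-indexes each basis as `W_n(b) = V_{k_n(b)}(b)`. For this family, two sets `W_{n+1}(a)` and `W_{n+1}(b)` that meet
always satisfy `W_{n+1}(a) ⊆ W_n(b)` or `W_{n+1}(b) ⊆ W_n(a)`: compare the indices
`k_{n+1}(a), k_{n+1}(b)` and apply Frink's condition at the smaller one. Hence the relations
`T_n = ⋃_b W_n(b) × W_n(b)` satisfy `T_{n+1} ∘ T_{n+1} ⊆ T_n`, so they form a countable basis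
of a uniformity, which induces the topology by Frink's condition again. A `T₀` uniform space
with countably generated uniformity is metrizable.
-/

open Set Filter Topology Uniformity SetRel

section

variable {Y : Type*}

theorem t1Space_of_iInter_nhds_eq_singleton {ι : Type*} [TopologicalSpace Y]
    (V : Y → ι → Set Y) (hnhds : ∀ b i, V b i ∈ 𝓝 b) (hinter : ∀ b, ⋂ i, V b i = {b}) :
    T1Space Y := by
  refine t1Space_iff_specializes_imp_eq.2 fun x y hxy => ?_
  have hx : x ∈ ⋂ i, V y i := mem_iInter.2 fun i => mem_of_mem_nhds (hxy (hnhds y i))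
  rwa [hinter y] at hx

theorem metrizableSpace_of_nhds_hasBasis_ball [TopologicalSpace Y] [T0Space Y]
    (T : ℕ → Set (Y × Y)) (hanti : Antitone T) (hsymm : ∀ n, Prod.swap ⁻¹' T n ⊆ T n)
    (hcomp : ∀ n, T (n + 1) ○ T (n + 1) ⊆ T n)
    (hnhds : ∀ x, (𝓝 x).HasBasis (fun _ => True) fun n => Prod.mk x ⁻¹' T n) :
    TopologicalSpace.MetrizableSpace Y := by
  have hB : (⨅ n, 𝓟 (T n)).HasBasis (fun _ => True) T :=
    hasBasis_iInf_principal hanti.directed_ge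
  let _ : UniformSpace Y :=
    { uniformity := ⨅ n, 𝓟 (T n)
      symm := (hB.tendsto_iff hB).2 fun n _ => ⟨n, trivial, fun _ hp => hsymm n hp⟩
      comp := (hB.lift' (monotone_id.relComp monotone_id)).le_basis_iff hB |>.2
        fun n _ => ⟨n + 1, trivial, hcomp n⟩
      nhds_eq_comap_uniformity := fun x => (hnhds x).eq_of_same_basis (hB.comap _) }
  have : IsCountablyGenerated (𝓤 Y) := isCountablyGenerated_seq T
  exact UniformSpace.metrizableSpace

def coverRel (W : Y → Set Y) : Set (Y × Y) :=
  ⋃ b, W b ×ˢ W b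

theorem mem_coverRel {W : Y → Set Y} {p : Y × Y} :
    p ∈ coverRel W ↔ ∃ b, p.1 ∈ W b ∧ p.2 ∈ W b := by
  simp only [coverRel, mem_iUnion, mem_prod]

theorem coverRel_mono {W W' : Y → Set Y} (h : ∀ b, W b ⊆ W' b) : coverRel W ⊆ coverRel W' :=
  iUnion_mono fun b => prod_mono (h b) (h b)

theorem swap_preimage_coverRel (W : Y → Set Y) : Prod.swap ⁻¹' coverRel W ⊆ coverRel W :=
  fun _ hp => let ⟨b, h₁, h₂⟩ := mem_coverRel.1 hp; mem_coverRel.2 ⟨b, h₂, h₁⟩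

theorem coverRel_comp_subset {W W' : Y → Set Y} (hle : ∀ b, W b ⊆ W' b)
    (hdich : ∀ a b, (W a ∩ W b).Nonempty → W a ⊆ W' b ∨ W b ⊆ W' a) :
    coverRel W ○ coverRel W ⊆ coverRel W' := by
  rintro ⟨x, z⟩ ⟨y, hxy, hyz⟩
  obtain ⟨a, hxa, hya⟩ := mem_coverRel.1 hxy
  obtain ⟨b, hyb, hzb⟩ := mem_coverRel.1 hyz
  rcases hdich a b ⟨y, hya, hyb⟩ with hab | hba
  · exact mem_coverRel.2 ⟨b, hab hxa, hle b hzb⟩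
  · exact mem_coverRel.2 ⟨a, hle a hxa, hba hzb⟩

theorem nhds_hasBasis_coverRel [TopologicalSpace Y] {W : Y → ℕ → Set Y}
    (hnhds : ∀ b n, W b n ∈ 𝓝 b) (hstar : ∀ x, ∀ U ∈ 𝓝 x, ∃ n, ∀ c, x ∈ W c n → W c n ⊆ U)
    (x : Y) : (𝓝 x).HasBasis (fun _ => True) fun n => Prod.mk x ⁻¹' coverRel (W · n) := by
  refine ⟨fun U => ⟨fun hU => ?_, fun ⟨n, _, hn⟩ => ?_⟩⟩
  · obtain ⟨n, hn⟩ := hstar x U hU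
    refine ⟨n, trivial, fun y hy => ?_⟩
    obtain ⟨c, hxc, hyc⟩ := mem_coverRel.1 hy
    exact hn c hxc hyc
  · refine mem_of_superset (hnhds x n) fun y hy => hn ?_
    exact mem_coverRel.2 ⟨x, mem_of_mem_nhds (hnhds x n), hy⟩

theorem metrizableSpace_of_nested_nhds [TopologicalSpace Y] [T0Space Y] (W : Y → ℕ → Set Y)
    (hanti : ∀ b, Antitone (W b)) (hnhds : ∀ b n, W b n ∈ 𝓝 b)
    (hstar : ∀ x, ∀ U ∈ 𝓝 x, ∃ n, ∀ c, x ∈ W c n → W c n ⊆ U)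
    (hdich : ∀ n a b, (W a (n + 1) ∩ W b (n + 1)).Nonempty →
      W a (n + 1) ⊆ W b n ∨ W b (n + 1) ⊆ W a n) :
    TopologicalSpace.MetrizableSpace Y :=
  metrizableSpace_of_nhds_hasBasis_ball (fun n => coverRel (W · n))
    (fun _ _ hmn => coverRel_mono fun b => hanti b hmn)
    (fun _ => swap_preimage_coverRel _)
    (fun n => coverRel_comp_subset (fun b => hanti b n.le_succ) (hdich n))
    (nhds_hasBasis_coverRel hnhds hstar)

section Frink

variable {V : Y → ℕ → Set Y} {J : Y → ℕ → ℕ}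

theorem strictMono_iterate_apply_zero {f : ℕ → ℕ} (hf : ∀ i, i < f i) :
    StrictMono fun n => f^[n] 0 :=
  strictMono_nat_of_lt_succ fun n => by
    simpa only [Function.iterate_succ_apply'] using hf (f^[n] 0)

theorem frink_subset (hV : ∀ b, Antitone (V b))
    (hJ : ∀ b i a, (V a (J b i) ∩ V b (J b i)).Nonempty → V a (J b i) ⊆ V b i)
    {a b : Y} {i m : ℕ} (hm : J b i ≤ m) (h : (V a m ∩ V b (J b i)).Nonempty) :
    V a m ⊆ V b i :=
  (hV a hm).trans <| hJ b i a <| h.mono <| inter_subset_inter_left _ (hV a hm)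

theorem frink_dichotomy (hV : ∀ b, Antitone (V b))
    (hJ : ∀ b i a, (V a (J b i) ∩ V b (J b i)).Nonempty → V a (J b i) ⊆ V b i)
    (n : ℕ) (a b : Y)
    (h : (V a ((J a)^[n + 1] 0) ∩ V b ((J b)^[n + 1] 0)).Nonempty) :
    V a ((J a)^[n + 1] 0) ⊆ V b ((J b)^[n] 0) ∨ V b ((J b)^[n + 1] 0) ⊆ V a ((J a)^[n] 0) := by
  simp only [Function.iterate_succ_apply'] at h ⊢
  rcases le_total (J a ((J a)^[n] 0)) (J b ((J b)^[n] 0)) with hab | hba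
  · exact .inr <| frink_subset hV hJ hab <| inter_comm _ _ ▸ h
  · exact .inl <| frink_subset hV hJ hba h

theorem frink_star (hV : ∀ b, Antitone (V b)) (hJgt : ∀ b i, i < J b i)
    (hJ : ∀ b i a, (V a (J b i) ∩ V b (J b i)).Nonempty → V a (J b i) ⊆ V b i)
    {x c : Y} {i : ℕ} (hx : x ∈ V x (J x i)) (hxc : x ∈ V c ((J c)^[J x i] 0)) :
    V c ((J c)^[J x i] 0) ⊆ V x i :=
  frink_subset hV hJ (strictMono_iterate_apply_zero (hJgt c)).le_apply ⟨x, hxc, hx⟩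

end Frink

end

/-- **Frink's metrization criterion.** If every point `b` of a topological
space `Y` has a decreasing neighborhood basis `V₁(b) ⊇ V₂(b) ⊇ ⋯` with `⋂ i, V_i(b) = {b}`,
and for every `b, i` there is `j > i` such that `V_j(a) ∩ V_j(b) ≠ ∅` implies
`V_j(a) ⊆ V_i(b)`, then `Y` is metrizable. -/
theorem frink_metrization {Y : Type*} [TopologicalSpace Y]
    (V : Y → ℕ → Set Y)
    (hnbhd : ∀ b : Y, ∀ i : ℕ, V b i ∈ nhds b)
    (hdecr : ∀ b : Y, ∀ i : ℕ, V b (i + 1) ⊆ V b i)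
    (hbasis : ∀ b : Y, ∀ U ∈ nhds b, ∃ i : ℕ, V b i ⊆ U)
    (hinter : ∀ b : Y, (⋂ i : ℕ, V b i) = {b})
    (hfrink : ∀ b : Y, ∀ i : ℕ, ∃ j : ℕ, i < j ∧
      ∀ a : Y, (V a j ∩ V b j).Nonempty → V a j ⊆ V b i) :
    TopologicalSpace.MetrizableSpace Y := by
  choose J hJgt hJ using hfrink
  have hV : ∀ b, Antitone (V b) := fun b => antitone_nat_of_succ_le (hdecr b)
  have := t1Space_of_iInter_nhds_eq_singleton V hnbhd hinter
  refine metrizableSpace_of_nested_nhds (fun b n => V b ((J b)^[n] 0))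
    (fun b => (hV b).comp_monotone (strictMono_iterate_apply_zero (hJgt b)).monotone)
    (fun b n => hnbhd b _) (fun x U hU => ?_) (frink_dichotomy hV hJ)
  obtain ⟨i, hi⟩ := hbasis x U hU
  exact ⟨J x i, fun c hxc => (frink_star hV hJgt hJ (mem_of_mem_nhds (hnbhd x _)) hxc).trans hi⟩
end
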